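/- arXiv:1610.00876 — 5 statements merged into one kernel-verified Lean document; each statement's English description precedes it below -/
import Mathlib

section
/- If a digraph F is δ⁺-maderian (every digraph of sufficiently large minimum out-degree contains a subdivision of F) and F has the Erdős–Pósa property for subdivisions, then for every positive integer k the disjoint union of k copies of F is also δ⁺-maderian. -/
noncomputable def outDeg {V : Type*} (D : V → V → Prop) (v : V) : ℕ := Nat.card {w // D v w}

noncomputable def inDeg {V : Type*} (D : V → V → Prop) (v : V) : ℕ := Nat.card {w // D w v}

/-- `D` contains a subdivision of `F`: branch vertices are given by an injective map `emb`,
and each arc of `F` is replaced by a directed path in `D` of length at least 1, the paths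
being internally disjoint from each other and from the branch vertices. -/
def IsSubdivision {U : Type*} {V : Type*} (F : U → U → Prop) (D : V → V → Prop) : Prop :=
  ∃ (emb : U → V) (len : U → U → ℕ) (p : U → U → ℕ → V),
    Function.Injective emb ∧
    (∀ u v, F u v → 1 ≤ len u v) ∧
    (∀ u v, F u v → p u v 0 = emb u ∧ p u v (len u v) = emb v) ∧
    (∀ u v, F u v → ∀ i < len u v, D (p u v i) (p u v (i+1))) ∧
    (∀ u v, F u v → ∀ i ≤ len u v, ∀ j ≤ len u v, p u v i = p u v j → i = j) ∧
    (∀ u v, F u v → ∀ i, 0 < i → i < len u v → ∀ w, p u v i ≠ emb w) ∧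
    (∀ u v, F u v → ∀ u' v', F u' v' → (u, v) ≠ (u', v') →
      ∀ i, 0 < i → i < len u v → ∀ j, 0 < j → j < len u' v' → p u v i ≠ p u' v' j)

/-- The disjoint union of `k` copies of the digraph `F`. -/
def kCopies (k : ℕ) {U : Type} (F : U → U → Prop) :
    (Fin k × U) → (Fin k × U) → Prop :=
  fun a b => a.1 = b.1 ∧ F a.2 b.2

/-- `F` is δ⁺-maderian: some minimum out-degree forces a subdivision of `F`. -/
def DPlusMaderian {U : Type} (F : U → U → Prop) : Prop :=
  ∃ d : ℕ, ∀ (V : Type) [Fintype V] [Nonempty V] (D : V → V → Prop),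
    Irreflexive D → (∀ v, d ≤ outDeg D v) → IsSubdivision F D

/-- `F` has the Erdős–Pósa property for subdivisions. -/
def HasErdosPosa {U : Type} (F : U → U → Prop) : Prop :=
  ∀ k : ℕ, 0 < k → ∃ φ : ℕ, ∀ (V : Type) [Fintype V] (D : V → V → Prop), Irreflexive D →
    IsSubdivision (kCopies k F) D ∨
    ∃ S : Finset V, S.card ≤ φ ∧
      ¬ IsSubdivision F (fun (a b : {v : V // v ∉ S}) => D a.val b.val)

/-!
Let `d` force a subdivision of `F` and let `φ` be the Erdős–Pósa bound for `k` disjoint copies.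
A digraph of minimum out-degree at least `d + φ + 1` either contains `k` disjoint subdivisions
of `F`, or has a set of at most `φ` vertices meeting every subdivision of `F`. The second case
is impossible: deleting `φ` vertices lowers each out-degree by at most `φ`, so it leaves a
nonempty digraph of minimum out-degree at least `d`, which still contains a subdivision of `F`.
-/

def deleteVerts {V : Type*} (D : V → V → Prop) (S : Finset V) :
    {v // v ∉ S} → {v // v ∉ S} → Prop :=
  fun a b => D a.val b.val

variable {V : Type*} [Fintype V]

lemma outDeg_le_card (D : V → V → Prop) (v : V) : outDeg D v ≤ Fintype.card V :=
  (Finite.card_subtype_le _).trans_eq Nat.card_eq_fintype_card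

lemma outDeg_le_outDeg_deleteVerts_add_card (D : V → V → Prop) (S : Finset V)
    (a : {v // v ∉ S}) : outDeg D a.val ≤ outDeg (deleteVerts D S) a + S.card := by
  classical
  have hsub : Finset.univ.filter (D a.val) ⊆
      (Finset.univ.filter (deleteVerts D S a)).map (Function.Embedding.subtype _) ∪ S := by
    intro w hw
    by_cases hwS : w ∈ S
    · exact Finset.mem_union_right _ hwS
    · refine Finset.mem_union_left _ (Finset.mem_map.2 ⟨⟨w, hwS⟩, ?_, rfl⟩)
      simpa [deleteVerts] using hw
  simp only [outDeg, Nat.card_eq_fintype_card, Fintype.card_subtype]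
  calc (Finset.univ.filter (D a.val)).card
      ≤ ((Finset.univ.filter (deleteVerts D S a)).map (Function.Embedding.subtype _) ∪ S).card :=
        Finset.card_le_card hsub
    _ ≤ _ := (Finset.card_union_le _ _).trans_eq (by rw [Finset.card_map])

lemma nonempty_compl_of_card_lt_outDeg (D : V → V → Prop) (S : Finset V) (v : V)
    (hv : S.card < outDeg D v) : Nonempty {v // v ∉ S} := by
  obtain ⟨w, -, hw⟩ := Finset.exists_mem_notMem_of_card_lt_card
    (hv.trans_le (outDeg_le_card D v) : S.card < (Finset.univ : Finset V).card)
  exact ⟨⟨w, hw⟩⟩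

theorem stmt4_general {U : Type} (F : U → U → Prop)
    (h1 : DPlusMaderian F) (h2 : HasErdosPosa F) (k : ℕ) (hk : 0 < k) :
    DPlusMaderian (kCopies k F) := by
  classical
  obtain ⟨d, hd⟩ := h1
  obtain ⟨φ, hφ⟩ := h2 k hk
  refine ⟨d + φ + 1, fun V _ hV D hirr hdeg => ?_⟩
  obtain h | ⟨S, hS, hfree⟩ := hφ V D hirr
  · exact h
  have : Nonempty {v // v ∉ S} :=
    nonempty_compl_of_card_lt_outDeg D S hV.some (by have := hdeg hV.some; omega)
  refine absurd (hd _ (deleteVerts D S) (fun a => hirr a.val) fun a => ?_) hfree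
  have hdrop := outDeg_le_outDeg_deleteVerts_add_card D S a
  have hdeg_a := hdeg a.val
  omega

/-- If `F` is δ⁺-maderian and has the Erdős–Pósa property, then the disjoint union of `k`
copies of `F` is δ⁺-maderian for every positive `k`. -/
theorem stmt4 {U : Type} [Fintype U] (F : U → U → Prop)
    (h1 : DPlusMaderian F) (h2 : HasErdosPosa F) (k : ℕ) (hk : 0 < k) :
    DPlusMaderian (kCopies k F) :=
  stmt4_general F h1 h2 k hk
end

section
/- If the transitive tournaments are δ⁰-maderian, then they are δ⁺-maderian; more precisely, for all k, mad_{δ⁺}(TT_k) ≤ mad_{δ⁰}(TT_{2k}). -/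
/-- The transitive tournament on `k` vertices. -/
def TT (k : ℕ) : Fin k → Fin k → Prop := fun a b => a < b

/-!
In the digraph `converseJoin D` (a converse copy of `D`, a copy of `D`, and all arcs from the
first to the second) every vertex has in- and out-degree at least `δ⁺(D)`, so it contains a
subdivision of `TT_{2k}`. No arc leaves the copy of `D`, so a directed path starting there stays
there. If the branch vertex `k` lies in the copy of `D`, then so do the branch vertices
`k, …, 2k - 1` and all paths between them: a subdivision of `TT_k` in `D`. Otherwise the branch
vertices `0, …, k - 1` and their paths lie in the converse copy, and reversing them gives a
subdivision of `TT_k` in `D` again.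
-/

open Function

variable {U U' V W : Type*}

structure Subdivision (F : U → U → Prop) (D : V → V → Prop) where
  emb : U → V
  len : U → U → ℕ
  path : U → U → ℕ → V
  emb_injective : Injective emb
  one_le_len : ∀ u v, F u v → 1 ≤ len u v
  path_zero : ∀ u v, F u v → path u v 0 = emb u
  path_len : ∀ u v, F u v → path u v (len u v) = emb v
  adj_path : ∀ u v, F u v → ∀ i < len u v, D (path u v i) (path u v (i + 1))
  path_inj : ∀ u v, F u v → ∀ i ≤ len u v, ∀ j ≤ len u v, path u v i = path u v j → i = j
  path_ne_emb : ∀ u v, F u v → ∀ i, 0 < i → i < len u v → ∀ w, path u v i ≠ emb w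
  path_disjoint : ∀ u v, F u v → ∀ u' v', F u' v' → (u, v) ≠ (u', v') →
    ∀ i, 0 < i → i < len u v → ∀ j, 0 < j → j < len u' v' → path u v i ≠ path u' v' j

theorem isSubdivision_iff {F : U → U → Prop} {D : V → V → Prop} :
    IsSubdivision F D ↔ Nonempty (Subdivision F D) :=
  ⟨fun ⟨e, l, p, h₁, h₂, h₃, h₄, h₅, h₆, h₇⟩ =>
    ⟨⟨e, l, p, h₁, h₂, fun u v h => (h₃ u v h).1, fun u v h => (h₃ u v h).2, h₄, h₅, h₆, h₇⟩⟩,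
   fun ⟨s⟩ => ⟨s.emb, s.len, s.path, s.emb_injective, s.one_le_len,
    fun u v h => ⟨s.path_zero u v h, s.path_len u v h⟩, s.adj_path, s.path_inj, s.path_ne_emb,
    s.path_disjoint⟩⟩

namespace Subdivision

variable {F : U → U → Prop} {D : V → V → Prop}

def ofIsEmpty [IsEmpty U] (F : U → U → Prop) (D : V → V → Prop) : Subdivision F D where
  emb := isEmptyElim
  len := isEmptyElim
  path := isEmptyElim
  emb_injective := isEmptyElim
  one_le_len := isEmptyElim
  path_zero := isEmptyElim
  path_len := isEmptyElim
  adj_path := isEmptyElim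
  path_inj := isEmptyElim
  path_ne_emb := isEmptyElim
  path_disjoint := isEmptyElim

def restrict (s : Subdivision F D) {F' : U' → U' → Prop} (ι : U' → U) (hι : Injective ι)
    (hF : ∀ a b, F' a b → F (ι a) (ι b)) : Subdivision F' D where
  emb := s.emb ∘ ι
  len a b := s.len (ι a) (ι b)
  path a b := s.path (ι a) (ι b)
  emb_injective := s.emb_injective.comp hι
  one_le_len a b h := s.one_le_len _ _ (hF a b h)
  path_zero a b h := s.path_zero _ _ (hF a b h)
  path_len a b h := s.path_len _ _ (hF a b h)
  adj_path a b h := s.adj_path _ _ (hF a b h)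
  path_inj a b h := s.path_inj _ _ (hF a b h)
  path_ne_emb a b h i hi₀ hi w := s.path_ne_emb _ _ (hF a b h) i hi₀ hi (ι w)
  path_disjoint a b h a' b' h' hne :=
    s.path_disjoint _ _ (hF a b h) _ _ (hF a' b' h') fun e => hne <| by
      simp only [Prod.mk.injEq] at e ⊢
      exact ⟨hι e.1, hι e.2⟩

def reverse (s : Subdivision F D) : Subdivision (flip F) (flip D) where
  emb := s.emb
  len u v := s.len v u
  path u v i := s.path v u (s.len v u - i)
  emb_injective := s.emb_injective
  one_le_len u v h := s.one_le_len v u h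
  path_zero u v h := by simpa using s.path_len v u h
  path_len u v h := by simpa using s.path_zero v u h
  adj_path u v h i hi := by
    have := s.adj_path v u h (s.len v u - (i + 1)) (by omega)
    rwa [show s.len v u - (i + 1) + 1 = s.len v u - i by omega] at this
  path_inj u v h i hi j hj e := by
    have := s.path_inj v u h _ (Nat.sub_le _ _) _ (Nat.sub_le _ _) e
    omega
  path_ne_emb u v h i hi₀ hi := s.path_ne_emb v u h _ (by omega) (by omega)
  path_disjoint u v h u' v' h' hne i hi₀ hi j hj₀ hj :=
    s.path_disjoint v u h v' u' h' (fun e => hne (by simp_all [Prod.mk.injEq]))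
      _ (by omega) (by omega) _ (by omega) (by omega)

def map (s : Subdivision F D) {D' : W → W → Prop} (g : V → W) (S : Set V)
    (hg : Set.InjOn g S) (hemb : ∀ u, s.emb u ∈ S)
    (hpath : ∀ u v, F u v → ∀ i ≤ s.len u v, s.path u v i ∈ S)
    (hD : ∀ x ∈ S, ∀ y ∈ S, D x y → D' (g x) (g y)) : Subdivision F D' where
  emb := g ∘ s.emb
  len := s.len
  path u v i := g (s.path u v i)
  emb_injective a b e := s.emb_injective (hg (hemb a) (hemb b) e)
  one_le_len := s.one_le_len
  path_zero u v h := congrArg g (s.path_zero u v h)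
  path_len u v h := congrArg g (s.path_len u v h)
  adj_path u v h i hi :=
    hD _ (hpath u v h i hi.le) _ (hpath u v h (i + 1) hi) (s.adj_path u v h i hi)
  path_inj u v h i hi j hj e :=
    s.path_inj u v h i hi j hj (hg (hpath u v h i hi) (hpath u v h j hj) e)
  path_ne_emb u v h i hi₀ hi w e :=
    s.path_ne_emb u v h i hi₀ hi w (hg (hpath u v h i hi.le) (hemb w) e)
  path_disjoint u v h u' v' h' hne i hi₀ hi j hj₀ hj e :=
    s.path_disjoint u v h u' v' h' hne i hi₀ hi j hj₀ hj
      (hg (hpath u v h i hi.le) (hpath u' v' h' j hj.le) e)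

end Subdivision

def converseJoin (D : V → V → Prop) : V ⊕ V → V ⊕ V → Prop
  | .inl a, .inl b => D b a
  | .inl _, .inr _ => True
  | .inr _, .inl _ => False
  | .inr a, .inr b => D a b

section converseJoin

variable {D : V → V → Prop}

theorem Irreflexive.converseJoin (h : Irreflexive D) : Irreflexive (converseJoin D) := by
  rintro (a | a) <;> exact h a

theorem converseJoin.isRight_of_isRight {x y : V ⊕ V} (h : converseJoin D x y)
    (hx : x.isRight) : y.isRight := by
  cases x <;> cases y <;> simp_all [converseJoin]

theorem converseJoin.swap_of_flip {x y : V ⊕ V} (h : flip (converseJoin D) x y) :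
    converseJoin D x.swap y.swap := by
  cases x <;> cases y <;> exact h

theorem converseJoin.of_isRight {x y : V ⊕ V} (hx : x.isRight) (hy : y.isRight)
    (h : converseJoin D x y) : D (Sum.elim id id x) (Sum.elim id id y) := by
  cases x <;> cases y <;> simp_all [converseJoin]

variable [Fintype V]

theorem outDeg_le_outDeg_converseJoin (x : V ⊕ V) :
    outDeg D (Sum.elim id id x) ≤ outDeg (converseJoin D) x := by
  cases x with
  | inl a =>
    exact Nat.card_le_card_of_injective
      (fun w : {w // D a w} => (⟨.inr w.1, trivial⟩ : {y // converseJoin D (.inl a) y}))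
      fun _ _ e => Subtype.ext (Sum.inr_injective (congrArg Subtype.val e))
  | inr a =>
    exact Nat.card_le_card_of_injective
      (fun w : {w // D a w} => (⟨.inr w.1, w.2⟩ : {y // converseJoin D (.inr a) y}))
      fun _ _ e => Subtype.ext (Sum.inr_injective (congrArg Subtype.val e))

theorem outDeg_le_inDeg_converseJoin (x : V ⊕ V) :
    outDeg D (Sum.elim id id x) ≤ inDeg (converseJoin D) x := by
  cases x with
  | inl a =>
    exact Nat.card_le_card_of_injective
      (fun w : {w // D a w} => (⟨.inl w.1, w.2⟩ : {y // converseJoin D y (.inl a)}))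
      fun _ _ e => Subtype.ext (Sum.inl_injective (congrArg Subtype.val e))
  | inr a =>
    exact Nat.card_le_card_of_injective
      (fun w : {w // D a w} => (⟨.inl w.1, trivial⟩ : {y // converseJoin D y (.inr a)}))
      fun _ _ e => Subtype.ext (Sum.inl_injective (congrArg Subtype.val e))

end converseJoin

namespace Subdivision

variable {F : U → U → Prop} {D : V → V → Prop}

theorem path_isRight (s : Subdivision F (converseJoin D)) {u v : U} (h : F u v)
    (hu : (s.emb u).isRight) : ∀ i ≤ s.len u v, (s.path u v i).isRight
  | 0, _ => by rwa [s.path_zero u v h]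
  | i + 1, hi =>
    converseJoin.isRight_of_isRight (s.adj_path u v h i hi) (s.path_isRight h hu i (by omega))

theorem emb_isRight_of_adj (s : Subdivision F (converseJoin D)) {u v : U} (h : F u v)
    (hu : (s.emb u).isRight) : (s.emb v).isRight := by
  simpa [s.path_len u v h] using s.path_isRight h hu _ le_rfl

def ofIsRight (s : Subdivision F (converseJoin D)) (h : ∀ u, (s.emb u).isRight) :
    Subdivision F D :=
  s.map (Sum.elim id id) {x | x.isRight}
    (by rintro (a | a) ha (b | b) hb e <;> simp_all)
    h (fun u v huv => s.path_isRight huv (h u))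
    fun _ hx _ hy => converseJoin.of_isRight hx hy

/-- `Sum.swap` maps the converse of `converseJoin D` isomorphically onto `converseJoin D`. -/
def reverseSwap (s : Subdivision F (converseJoin D)) : Subdivision (flip F) (converseJoin D) :=
  s.reverse.map Sum.swap Set.univ Sum.swap_leftInverse.injective.injOn (fun _ => trivial)
    (fun _ _ _ _ _ => trivial) fun _ _ _ _ => converseJoin.swap_of_flip

theorem nonempty_of_converseJoin {k : ℕ} (s : Subdivision (TT (2 * k)) (converseJoin D)) :
    Nonempty (Subdivision (TT k) D) := by
  rcases k.eq_zero_or_pos with rfl | hk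
  · exact ⟨ofIsEmpty _ _⟩
  let m : Fin (2 * k) := ⟨k, by omega⟩
  by_cases hm : (s.emb m).isRight
  · let ι : Fin k → Fin (2 * k) := fun a => ⟨k + a, by omega⟩
    have hι : Injective ι := fun a b e => Fin.ext (by simpa [ι] using e)
    refine ⟨(s.restrict ι hι fun a b (h : a < b) => ?_).ofIsRight fun a => ?_⟩
    · exact Fin.mk_lt_mk.2 (Nat.add_lt_add_left h k)
    · change (s.emb (ι a)).isRight
      rcases (show m ≤ ι a from Fin.le_def.2 (by simp [m, ι])).eq_or_lt with e | e
      · rwa [← e]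
      · exact s.emb_isRight_of_adj e hm
  · have hm' : (s.reverseSwap.emb m).isRight := by
      change (s.emb m).swap.isRight
      rw [Sum.isRight_swap]
      exact Sum.not_isRight.1 hm
    let ι : Fin k → Fin (2 * k) := fun a => ⟨k - 1 - a, by omega⟩
    have hι : Injective ι := fun a b e => Fin.ext (by simp [ι] at e; omega)
    refine ⟨(s.reverseSwap.restrict ι hι fun a b (h : a < b) => ?_).ofIsRight fun a => ?_⟩
    · have : (a : ℕ) < b := h
      exact Fin.mk_lt_mk.2 (by omega)
    · change (s.reverseSwap.emb (ι a)).isRight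
      rcases (show ι a ≤ m from Fin.le_def.2 (by simp [m, ι]; omega)).eq_or_lt with e | e
      · rwa [e]
      · exact s.reverseSwap.emb_isRight_of_adj e hm'

end Subdivision

theorem stmt5_general :
    ∀ (k d : ℕ),
      (∀ (V : Type) [Fintype V] [Nonempty V] (D : V → V → Prop), Irreflexive D →
        (∀ v, d ≤ outDeg D v) → (∀ v, d ≤ inDeg D v) → IsSubdivision (TT (2 * k)) D) →
      (∀ (V : Type) [Fintype V] [Nonempty V] (D : V → V → Prop), Irreflexive D →
        (∀ v, d ≤ outDeg D v) → IsSubdivision (TT k) D) := by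
  intro k d h2k V _ _ D hirr hout
  have hjoin := h2k (V ⊕ V) (converseJoin D) hirr.converseJoin
    (fun x => (hout _).trans (outDeg_le_outDeg_converseJoin x))
    (fun x => (hout _).trans (outDeg_le_inDeg_converseJoin x))
  obtain ⟨s⟩ := isSubdivision_iff.1 hjoin
  exact isSubdivision_iff.2 s.nonempty_of_converseJoin

/-- If transitive tournaments are δ⁰-maderian, then they are δ⁺-maderian; more precisely,
any `d` that works as `mad_{δ⁰}(TT_{2k})` also works as `mad_{δ⁺}(TT_k)`, so
`mad_{δ⁺}(TT_k) ≤ mad_{δ⁰}(TT_{2k})`. -/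
theorem stmt5
    (h : ∀ k : ℕ, ∃ d : ℕ, ∀ (V : Type) [Fintype V] [Nonempty V] (D : V → V → Prop),
      Irreflexive D → (∀ v, d ≤ outDeg D v) → (∀ v, d ≤ inDeg D v) →
      IsSubdivision (TT k) D) :
    ∀ (k d : ℕ),
      (∀ (V : Type) [Fintype V] [Nonempty V] (D : V → V → Prop), Irreflexive D →
        (∀ v, d ≤ outDeg D v) → (∀ v, d ≤ inDeg D v) → IsSubdivision (TT (2 * k)) D) →
      (∀ (V : Type) [Fintype V] [Nonempty V] (D : V → V → Prop), Irreflexive D →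
        (∀ v, d ≤ outDeg D v) → IsSubdivision (TT k) D) :=
  stmt5_general
end

section
/- For every positive integer k, the least integer d such that every digraph with minimum out-degree at least d contains a subdivision of C(k,1) equals k; the same holds for minimum of in- and out-degree. -/
/-- `D` contains a subdivision of `C(k,1)`: two internally disjoint `(x,y)`-dipaths,
one of length at least `k` and one of length at least `1`. -/
def HasSubdivCk1 (k : ℕ) {V : Type*} (D : V → V → Prop) : Prop :=
  ∃ (x y : V) (m₁ m₂ : ℕ) (p q : ℕ → V),
    x ≠ y ∧ k ≤ m₁ ∧ 1 ≤ m₂ ∧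
    p 0 = x ∧ p m₁ = y ∧ q 0 = x ∧ q m₂ = y ∧
    (∀ i < m₁, D (p i) (p (i + 1))) ∧
    (∀ i < m₂, D (q i) (q (i + 1))) ∧
    (∀ i ≤ m₁, ∀ j ≤ m₁, p i = p j → i = j) ∧
    (∀ i ≤ m₂, ∀ j ≤ m₂, q i = q j → i = j) ∧
    (∀ i, 0 < i → i < m₁ → ∀ j, 0 < j → j < m₂ → p i ≠ q j)

section Dipath

variable {V : Type*} (D : V → V → Prop)

/-- The dipath `p 0 → p 1 → ⋯ → p l`; the values of `p` beyond `l` play no role. -/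
def IsDipath (p : ℕ → V) (l : ℕ) : Prop :=
  (∀ t < l, D (p t) (p (t + 1))) ∧ ∀ s ≤ l, ∀ t ≤ l, p s = p t → s = t

variable {D} {p : ℕ → V} {l : ℕ}

theorem IsDipath.length_lt_card [Fintype V] (hp : IsDipath D p l) : l < Fintype.card V := by
  have hinj : Function.Injective fun t : Fin (l + 1) => p t := fun s t hst =>
    Fin.ext (hp.2 s (Nat.lt_succ_iff.mp s.isLt) t (Nat.lt_succ_iff.mp t.isLt) hst)
  simpa using Fintype.card_le_of_injective _ hinj

theorem IsDipath.snoc {w : V} (hp : IsDipath D p l) (hw : D (p l) w)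
    (hnew : ∀ t ≤ l, p t ≠ w) : IsDipath D (fun t => if t ≤ l then p t else w) (l + 1) := by
  refine ⟨fun t ht => ?_, fun s _ t _ hst => ?_⟩
  · rcases Nat.lt_or_eq_of_le (Nat.lt_succ_iff.mp ht) with ht | rfl
    · simpa [ht.le, Nat.succ_le_of_lt ht] using hp.1 t ht
    · simpa using hw
  · by_cases hsl : s ≤ l <;> by_cases htl : t ≤ l <;> simp only [hsl, htl, if_true, if_false] at hst
    · exact hp.2 s hsl t htl hst
    · exact absurd hst (hnew s hsl)
    · exact absurd hst.symm (hnew t htl)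
    · omega

theorem IsDipath.cons {v : V} (hp : IsDipath D p l) (hv : D v (p 0))
    (hnew : ∀ t ≤ l, p t ≠ v) :
    IsDipath D (fun t => if t = 0 then v else p (t - 1)) (l + 1) := by
  refine ⟨fun t ht => ?_, fun s hs t ht hst => ?_⟩
  · rcases t with _ | t
    · simpa using hv
    · simpa using hp.1 t (by omega)
  · rcases s with _ | s <;> rcases t with _ | t <;> simp only [if_true, if_false,
      Nat.succ_ne_zero, Nat.add_sub_cancel] at hst
    · rfl
    · exact absurd hst.symm (hnew t (by omega))
    · exact absurd hst (hnew s (by omega))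
    · rw [hp.2 s (by omega) t (by omega) hst]

theorem IsDipath.segment {i j : ℕ} (hp : IsDipath D p l) (hij : i ≤ j) (hjl : j ≤ l) :
    IsDipath D (fun t => p (i + t)) (j - i) :=
  ⟨fun t ht => by simpa [Nat.add_assoc] using hp.1 (i + t) (by omega),
    fun s hs t ht hst => by have := hp.2 (i + s) (by omega) (i + t) (by omega) hst; omega⟩

variable (D) in
theorem exists_nonextendable_dipath [Fintype V] [Nonempty V] :
    ∃ p l, IsDipath D p l ∧ ∀ w, D (p l) w → ∃ t ≤ l, p t = w := by
  classical
  have h0 : ∃ p, IsDipath D p 0 :=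
    ⟨fun _ => Classical.arbitrary V, fun t ht => absurd ht t.not_lt_zero,
      fun s hs t ht _ => by omega⟩
  obtain ⟨p, hp⟩ := Nat.findGreatest_spec (P := fun l => ∃ p, IsDipath D p l)
    (Nat.zero_le (Fintype.card V)) h0
  refine ⟨p, _, hp, fun w hw => ?_⟩
  by_contra! hnew
  have hlonger := hp.snoc hw hnew
  exact Nat.findGreatest_is_greatest (Nat.lt_succ_self _) hlonger.length_lt_card.le
    ⟨_, hlonger⟩

theorem hasSubdivCk1_of_dipath_of_adj {m k : ℕ} (hp : IsDipath D p m) (hm : m ≠ 0)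
    (hkm : k ≤ m) (harc : D (p 0) (p m)) : HasSubdivCk1 k D := by
  have hxy : p 0 ≠ p m := fun h => hm (hp.2 0 (Nat.zero_le m) m le_rfl h).symm
  refine ⟨p 0, p m, m, 1, p, fun t => if t = 0 then p 0 else p m, hxy, hkm, le_rfl, rfl, rfl,
    rfl, by simp, hp.1, fun t ht => ?_, hp.2, fun s hs t ht hst => ?_,
    fun _ _ _ _ hj0 hj1 => absurd hj1 (by omega)⟩
  · obtain rfl : t = 0 := by omega
    simpa using harc
  · interval_cases s <;> interval_cases t <;> simp_all

theorem outDeg_le_card_of_forall_adj {v : V} {s : Finset ℕ}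
    (h : ∀ w, D v w → ∃ t ∈ s, p t = w) : outDeg D v ≤ s.card := by
  classical
  calc outDeg D v = {w | D v w}.ncard := rfl
    _ ≤ (s.image p : Set V).ncard := Set.ncard_le_ncard fun w hw => by
        obtain ⟨t, ht, rfl⟩ := h w hw
        exact Finset.mem_coe.mpr (Finset.mem_image_of_mem p ht)
    _ ≤ s.card := by rw [Set.ncard_coe_finset]; exact Finset.card_image_le

theorem hasSubdivCk1_of_le_outDeg [Fintype V] [Nonempty V] {k : ℕ} (hk : 1 ≤ k)
    (hirr : Irreflexive D) (hdeg : ∀ v, k ≤ outDeg D v) : HasSubdivCk1 k D := by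
  classical
  obtain ⟨p, l, hp, hmax⟩ := exists_nonextendable_dipath D
  set S := (Finset.range l).filter fun t => D (p l) (p t)
  have hkS : k ≤ S.card := (hdeg (p l)).trans <| outDeg_le_card_of_forall_adj fun w hw => by
    obtain ⟨t, htl, rfl⟩ := hmax w hw
    have htl' : t ≠ l := by rintro rfl; exact hirr _ hw
    exact ⟨t, Finset.mem_filter.mpr ⟨Finset.mem_range.mpr (by omega), hw⟩, rfl⟩
  have hS : S.Nonempty := Finset.card_pos.mp (by omega)
  set i := S.min' hS
  set j := S.max' hS
  have hij : i ≤ j := S.min'_le_max' hS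
  have hjl : j < l := Finset.mem_range.mp (Finset.mem_filter.mp (S.max'_mem hS)).1
  have hDi : D (p l) (p i) := (Finset.mem_filter.mp (S.min'_mem hS)).2
  have hDj : D (p l) (p j) := (Finset.mem_filter.mp (S.max'_mem hS)).2
  have hSij : S.card ≤ j - i + 1 := by
    have := Finset.card_le_card (t := Finset.Icc i j) fun t ht =>
      Finset.mem_Icc.mpr ⟨S.min'_le t ht, S.le_max' t ht⟩
    rw [Nat.card_Icc] at this
    omega
  have hcycle := (hp.segment hij hjl.le).cons (v := p l) (by simpa using hDi)
    fun t ht h => by have := hp.2 _ (by omega) l le_rfl h; omega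
  refine hasSubdivCk1_of_dipath_of_adj hcycle (Nat.succ_ne_zero _) (by omega) ?_
  simpa [show i + (j - i) = j by omega] using hDj

theorem not_hasSubdivCk1_of_card_le [Fintype V] {k : ℕ} (h : Fintype.card V ≤ k) :
    ¬ HasSubdivCk1 k D := by
  rintro ⟨-, -, m₁, -, p, -, -, hkm, -, -, -, -, -, hparc, -, hpinj, -, -⟩
  have := IsDipath.length_lt_card (D := D) ⟨hparc, hpinj⟩
  omega

theorem outDeg_ne [Fintype V] (v : V) : outDeg (· ≠ ·) v = Fintype.card V - 1 := by
  classical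
  simp only [outDeg, ne_comm (a := v)]
  rw [Nat.card_eq_fintype_card, Fintype.card_subtype_compl, Fintype.card_subtype_eq]

theorem inDeg_ne [Fintype V] (v : V) : inDeg (· ≠ ·) v = Fintype.card V - 1 := by
  classical
  rw [inDeg, Nat.card_eq_fintype_card, Fintype.card_subtype_compl, Fintype.card_subtype_eq]

end Dipath

theorem le_of_forall_le_degrees_hasSubdivCk1 {k d : ℕ} (hk : 1 ≤ k)
    (hd : ∀ (V : Type) [Fintype V] [Nonempty V] (D : V → V → Prop),
      Irreflexive D → (∀ v, d ≤ outDeg D v) → (∀ v, d ≤ inDeg D v) → HasSubdivCk1 k D) :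
    k ≤ d := by
  by_contra! hdk
  have : Nonempty (Fin k) := ⟨⟨0, hk⟩⟩
  refine not_hasSubdivCk1_of_card_le (Fintype.card_fin k).le
    (hd (Fin k) (· ≠ ·) (fun _ h => h rfl) (fun v => ?_) (fun v => ?_))
  · rw [outDeg_ne, Fintype.card_fin]; omega
  · rw [inDeg_ne, Fintype.card_fin]; omega

/-- `mad_{δ⁺}(C(k,1)) = mad_{δ⁰}(C(k,1)) = k`: the least `d` such that every (finite,
nonempty, loopless) digraph with minimum out-degree (resp. minimum in- and out-degree) at
least `d` contains a subdivision of `C(k,1)` equals `k`. -/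
theorem stmt9 (k : ℕ) (hk : 1 ≤ k) :
    IsLeast {d : ℕ | ∀ (V : Type) [Fintype V] [Nonempty V] (D : V → V → Prop),
      Irreflexive D → (∀ v, d ≤ outDeg D v) → HasSubdivCk1 k D} k ∧
    IsLeast {d : ℕ | ∀ (V : Type) [Fintype V] [Nonempty V] (D : V → V → Prop),
      Irreflexive D → (∀ v, d ≤ outDeg D v) → (∀ v, d ≤ inDeg D v) →
      HasSubdivCk1 k D} k := by
  have upper : ∀ (V : Type) [Fintype V] [Nonempty V] (D : V → V → Prop),
      Irreflexive D → (∀ v, k ≤ outDeg D v) → HasSubdivCk1 k D :=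
    fun _ _ _ _ hirr hdeg => hasSubdivCk1_of_le_outDeg hk hirr hdeg
  exact ⟨⟨upper, fun d hd => le_of_forall_le_degrees_hasSubdivCk1 hk
      fun V _ _ D hirr hout _ => hd V D hirr hout⟩,
    ⟨fun V _ _ D hirr hout _ => upper V D hirr hout,
      fun d hd => le_of_forall_le_degrees_hasSubdivCk1 hk hd⟩⟩
end

section
/- Let D be a strongly connected digraph, let u ∈ V(D), and for each i ≥ 0 let L_i = {v : dist(u,v) = i} (or dually L_i = {v : dist(v,u) = i}). Then there exists a level L_i such that χ⃗(D⟨L_i⟩) ≥ χ⃗(D)/2. -/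
/-- There is a closed directed walk of positive length all of whose vertices lie in `A`. -/
def HasCycleIn {V : Type*} (D : V → V → Prop) (A : Set V) : Prop :=
  ∃ (n : ℕ) (p : ℕ → V), 1 ≤ n ∧ p n = p 0 ∧ (∀ i < n, D (p i) (p (i+1))) ∧ (∀ i ≤ n, p i ∈ A)

/-- The dichromatic number: least `k` such that the vertices can be coloured with `k` colours
with every colour class inducing an acyclic subdigraph. -/
noncomputable def dichrom {V : Type*} (D : V → V → Prop) : ℕ :=
  sInf {k : ℕ | ∃ c : V → Fin k, ∀ i : Fin k, ¬ HasCycleIn D {v | c v = i}}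

/-- `v` reaches `u` by a directed walk. -/
def Reach {V : Type*} (D : V → V → Prop) (u v : V) : Prop :=
  ∃ (n : ℕ) (p : ℕ → V), p 0 = u ∧ p n = v ∧ ∀ i < n, D (p i) (p (i + 1))

/-- The distance from `u` to `v`: minimum length of a directed path from `u` to `v`. -/
noncomputable def ddist {V : Type*} (D : V → V → Prop) (u v : V) : ℕ :=
  sInf {n : ℕ | ∃ p : ℕ → V, p 0 = u ∧ p n = v ∧ ∀ i < n, D (p i) (p (i + 1))}

/-!
Along an arc the distance from `u` grows by at most one. On a cycle whose levels all have the
same parity a step can therefore never go up, so the level is constant and the cycle lies in a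
single level `L_i`. Colouring each vertex by the parity of its level together with its colour in
an optimal acyclic colouring of its level thus gives an acyclic colouring of `D` with
`2 · max_i χ⃗(D⟨L_i⟩)` colours. Levels towards `u` are the levels from `u` in the reversed
digraph, which has the same dichromatic number.
-/

section Digraph

variable {V : Type*} {D : V → V → Prop}

lemma dichrom_le_card {ι : Type*} [Fintype ι] (c : V → ι)
    (hc : ∀ j, ¬ HasCycleIn D {v | c v = j}) : dichrom D ≤ Fintype.card ι := by
  refine Nat.sInf_le ⟨Fintype.equivFin ι ∘ c, fun j => ?_⟩
  simpa only [Function.comp_apply, ← Equiv.eq_symm_apply] using hc _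

lemma HasCycleIn.exists_adj {A : Set V} (h : HasCycleIn D A) : ∃ a ∈ A, ∃ b ∈ A, D a b := by
  obtain ⟨n, p, hn, -, harc, hA⟩ := h
  exact ⟨p 0, hA 0 (Nat.zero_le n), p 1, hA 1 hn, harc 0 hn⟩

lemma exists_acyclic_coloring [Fintype V] (hD : Irreflexive D) :
    ∃ c : V → Fin (dichrom D), ∀ j, ¬ HasCycleIn D {v | c v = j} := by
  suffices h : ∃ c : V → Fin (Fintype.card V), ∀ j, ¬ HasCycleIn D {v | c v = j} from
    Nat.sInf_mem (s := {k | ∃ c : V → Fin k, ∀ j, ¬ HasCycleIn D {v | c v = j}}) ⟨_, h⟩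
  refine ⟨Fintype.equivFin V, fun j hcyc => ?_⟩
  obtain ⟨a, ha, b, hb, hab⟩ := hcyc.exists_adj
  obtain rfl : a = b := (Fintype.equivFin V).injective (ha.trans hb.symm)
  exact hD a hab

lemma HasCycleIn.flip {A : Set V} (h : HasCycleIn D A) : HasCycleIn (flip D) A := by
  obtain ⟨n, p, hn, hcl, harc, hA⟩ := h
  refine ⟨n, fun i => p (n - i), hn, by simp [hcl], fun i hi => ?_, fun i _ => hA _ (by omega)⟩
  have := harc (n - (i + 1)) (by omega)
  rwa [show n - (i + 1) + 1 = n - i by omega] at this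

lemma hasCycleIn_flip_iff {A : Set V} : HasCycleIn (flip D) A ↔ HasCycleIn D A :=
  ⟨HasCycleIn.flip, HasCycleIn.flip⟩

lemma dichrom_flip (D : V → V → Prop) : dichrom (flip D) = dichrom D := by
  simp only [dichrom, hasCycleIn_flip_iff]

def induce (D : V → V → Prop) (P : V → Prop) : Subtype P → Subtype P → Prop :=
  fun a b => D a.val b.val

lemma HasCycleIn.induce {P : V → Prop} {A : Set (Subtype P)}
    (h : HasCycleIn D {v | ∃ hv : P v, ⟨v, hv⟩ ∈ A}) : HasCycleIn (induce D P) A := by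
  obtain ⟨n, p, hn, hcl, harc, hA⟩ := h
  -- clamped at `n`, since beyond `n` the walk `p` need not stay in `P`
  have hP : ∀ i, P (p (min i n)) := fun i => (hA _ (min_le_right i n)).fst
  refine ⟨n, fun i => ⟨p (min i n), hP i⟩, hn, ?_, fun i hi => ?_, fun i _ => ?_⟩
  · simpa using hcl
  · change D (p (min i n)) (p (min (i + 1) n))
    rw [min_eq_left hi.le, min_eq_left hi]
    exact harc i hi
  · exact (hA _ (min_le_right i n)).snd

end Digraph

section Distance

variable {V : Type*} {D : V → V → Prop}

lemma ddist_le {u v : V} {n : ℕ} (p : ℕ → V) (h0 : p 0 = u) (hn : p n = v)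
    (harc : ∀ i < n, D (p i) (p (i + 1))) : ddist D u v ≤ n :=
  Nat.sInf_le ⟨p, h0, hn, harc⟩

lemma exists_walk_ddist {u v : V} (h : Reach D u v) :
    ∃ p : ℕ → V, p 0 = u ∧ p (ddist D u v) = v ∧ ∀ i < ddist D u v, D (p i) (p (i + 1)) :=
  Nat.sInf_mem (s := {n | ∃ p : ℕ → V, p 0 = u ∧ p n = v ∧ ∀ i < n, D (p i) (p (i + 1))}) h

lemma ddist_le_one {a b : V} (h : D a b) : ddist D a b ≤ 1 :=
  ddist_le (fun i => if i = 0 then a else b) rfl rfl fun i hi => by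
    obtain rfl : i = 0 := by omega
    exact h

lemma ddist_triangle {u v w : V} (huv : Reach D u v) (hvw : Reach D v w) :
    ddist D u w ≤ ddist D u v + ddist D v w := by
  obtain ⟨p, hp0, hpm, hp⟩ := exists_walk_ddist huv
  obtain ⟨q, hq0, hqn, hq⟩ := exists_walk_ddist hvw
  set m := ddist D u v
  refine ddist_le (fun i => if i < m then p i else q (i - m)) ?_ (by simp [hqn]) fun i hi => ?_
  · rcases Nat.eq_zero_or_pos m with hm | hm
    · simp only [hm, lt_irrefl, if_false, Nat.sub_zero]
      rw [hq0, ← hpm, hm, hp0]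
    · simp only [hm, if_true]
      exact hp0
  · split_ifs with hi₁ hi₂ hi₂
    · exact hp i hi₁
    · rw [show i + 1 - m = 0 by omega, hq0, ← hpm, show m = i + 1 by omega]
      exact hp i hi₁
    · omega
    · have := hq (i - m) (by omega)
      rwa [show i - m + 1 = i + 1 - m by omega] at this

end Distance

lemma eq_of_le_add_one_of_mod_two_eq {q : ℕ → ℕ} {n : ℕ} (hstep : ∀ i < n, q (i + 1) ≤ q i + 1)
    (hpar : ∀ i ≤ n, q i % 2 = q 0 % 2) (hcl : q n = q 0) : ∀ i ≤ n, q i = q 0 := by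
  have hanti : Antitone fun i => q (min i n) := antitone_nat_of_succ_le fun i => by
    change q (min (i + 1) n) ≤ q (min i n)
    rcases lt_or_ge i n with hi | hi
    · have := hstep i hi
      have := hpar i hi.le
      have := hpar (i + 1) hi
      simp only [min_eq_left hi.le, min_eq_left (show i + 1 ≤ n from hi)]
      omega
    · simp [min_eq_right hi, min_eq_right (hi.trans (Nat.le_succ i))]
  intro i hi
  have h0 := hanti (Nat.zero_le i)
  have hn := hanti hi
  simp only [min_eq_left hi, min_eq_left (Nat.zero_le n), min_self] at h0 hn
  omega

section Levels

variable {V : Type*} [Fintype V] {D : V → V → Prop}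

lemma dichrom_le_two_mul_of_levels (hD : Irreflexive D) {f : V → ℕ}
    (hf : ∀ a b, D a b → f b ≤ f a + 1) {m : ℕ}
    (hm : ∀ v, dichrom (induce D (f · = f v)) ≤ m) : dichrom D ≤ 2 * m := by
  choose c hc using fun i => exists_acyclic_coloring (D := induce D (f · = i)) fun a => hD a.val
  have c_congr : ∀ v i (h : f v = i), (c (f v) ⟨v, rfl⟩ : ℕ) = c i ⟨v, h⟩ := by
    rintro v _ rfl
    rfl
  let κ : V → Fin 2 × Fin m := fun v =>
    (⟨f v % 2, Nat.mod_lt _ two_pos⟩, Fin.castLE (hm v) (c (f v) ⟨v, rfl⟩))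
  refine (dichrom_le_card κ fun j hcyc => ?_).trans (by simp)
  obtain ⟨n, p, hn, hcl, harc, hA⟩ := hcyc
  have hκ : ∀ k ≤ n, κ (p k) = κ (p 0) := fun k hk => (hA k hk).trans (hA 0 n.zero_le).symm
  have hlev : ∀ k ≤ n, f (p k) = f (p 0) :=
    eq_of_le_add_one_of_mod_two_eq (q := f ∘ p) (fun k hk => hf _ _ (harc k hk))
      (fun k hk => congrArg (Fin.val ∘ Prod.fst) (hκ k hk)) (congrArg f hcl)
  refine hc (f (p 0)) (c (f (p 0)) ⟨p 0, rfl⟩) (HasCycleIn.induce ⟨n, p, hn, hcl, harc, ?_⟩)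
  intro k hk
  refine ⟨hlev k hk, ?_⟩
  have := congrArg (Fin.val ∘ Prod.snd) (hκ k hk)
  simp only [Function.comp_apply, Fin.val_castLE, κ] at this
  exact Fin.ext ((c_congr _ _ (hlev k hk)).symm.trans this)

lemma exists_level_dichrom_ge (hD : Irreflexive D) {f : V → ℕ}
    (hf : ∀ a b, D a b → f b ≤ f a + 1) : ∃ i, dichrom D ≤ 2 * dichrom (induce D (f · = i)) := by
  obtain ⟨i, hi⟩ : ∃ i, ∀ v, dichrom (induce D (f · = f v)) ≤ dichrom (induce D (f · = i)) := by
    rcases isEmpty_or_nonempty V with hV | hV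
    · exact ⟨0, isEmptyElim⟩
    · obtain ⟨v, -, hv⟩ := Finset.univ.exists_max_image
        (fun v => dichrom (induce D (f · = f v))) Finset.univ_nonempty
      exact ⟨f v, fun w => hv w (Finset.mem_univ w)⟩
  exact ⟨i, dichrom_le_two_mul_of_levels hD hf hi⟩

end Levels

/-- In a strongly connected digraph, for the BFS levels from a vertex `u` (out-levels, and
dually in-levels), some level `L` satisfies `χ⃗(D⟨L⟩) ≥ χ⃗(D)/2`. -/
theorem stmt12 {V : Type*} [Fintype V] (D : V → V → Prop) (hD : Irreflexive D)
    (hstrong : ∀ u v : V, Reach D u v) (u : V) :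
    (∃ i : ℕ, dichrom D ≤
      2 * dichrom (fun (a b : {v : V // ddist D u v = i}) => D a.val b.val)) ∧
    (∃ i : ℕ, dichrom D ≤
      2 * dichrom (fun (a b : {v : V // ddist D v u = i}) => D a.val b.val)) := by
  constructor
  · exact exists_level_dichrom_ge hD fun a b hab =>
      (ddist_triangle (hstrong u a) (hstrong a b)).trans (Nat.add_le_add_left (ddist_le_one hab) _)
  · obtain ⟨i, hi⟩ := exists_level_dichrom_ge (D := flip D) (f := (ddist D · u))
      (fun a => hD a) fun a b hba => by
        have := ddist_triangle (hstrong b a) (hstrong a u)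
        have := ddist_le_one (D := D) hba
        omega
    refine ⟨i, ?_⟩
    rwa [← dichrom_flip (fun (a b : {v : V // ddist D v u = i}) => D a.val b.val), ← dichrom_flip D]
end

section
/- Every digraph F with n vertices and m arcs is χ⃗-maderian, with mad_{χ⃗}(F) ≤ 4^m (n−1) + 1. That is, every digraph D with dichromatic number at least 4^m(n−1)+1 contains a subdivision of F. -/
/-!
Induction on the number of arcs of `F`. If `χ⃗(D) > 4t`, some strong component `S` of `D` has
`χ⃗(S) > 4t`, because a cycle never leaves a strong component. Fix `r ∈ S` and sort the vertices of
`S` into levels `L(i, j)` by their distance `i` from `r` and `j` to `r`. Along an arc the distance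
from `r` grows by at most one and the distance to `r` drops by at most one, so on a cycle whose
vertices share the parities of `i` and `j` the first never grows, the second never drops, and
both are constant. Hence `t`-colourings of
all levels, refined by these two parities, would give a `4t`-colouring of `S`; so some level `B`
has `χ⃗(B) > t`. Two vertices of `B` are joined through `r` by shortest paths whose inner vertices
lie on other levels. A subdivision of `F` minus an arc `u₀v₀` inside `B`, given by induction,
is completed by routing `u₀v₀` along such a path.
-/

open Set

section Walks

variable {V : Type*} {D : V → V → Prop} {A B : Set V} {n m : ℕ} {p q : ℕ → V} {x y z : V}

structure IsWalkIn (D : V → V → Prop) (A : Set V) (n : ℕ) (p : ℕ → V) (x y : V) : Prop where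
  start : p 0 = x
  finish : p n = y
  adj : ∀ i < n, D (p i) (p (i + 1))
  mem : ∀ i ≤ n, p i ∈ A

namespace IsWalkIn

lemma mono (h : IsWalkIn D A n p x y) (hAB : A ⊆ B) : IsWalkIn D B n p x y :=
  ⟨h.start, h.finish, h.adj, fun i hi => hAB (h.mem i hi)⟩

lemma nil (hx : x ∈ A) : IsWalkIn D A 0 (fun _ => x) x x :=
  ⟨rfl, rfl, fun _ hi => absurd hi (Nat.not_lt_zero _), fun _ _ => hx⟩

lemma single (hxy : D x y) (hx : x ∈ A) (hy : y ∈ A) :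
    IsWalkIn D A 1 (fun i => if i = 0 then x else y) x y :=
  ⟨rfl, rfl, fun i hi => by simpa [Nat.lt_one_iff.1 hi] using hxy,
    fun i _ => by split_ifs <;> assumption⟩

lemma take (h : IsWalkIn D A n p x y) {k : ℕ} (hk : k ≤ n) : IsWalkIn D A k p x (p k) :=
  ⟨h.start, rfl, fun i hi => h.adj i (by omega), fun i hi => h.mem i (by omega)⟩

lemma drop (h : IsWalkIn D A n p x y) {k : ℕ} (hk : k ≤ n) :
    IsWalkIn D A (n - k) (fun i => p (k + i)) (p k) y :=
  ⟨rfl, by simpa [Nat.add_sub_cancel' hk] using h.finish,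
    fun i hi => h.adj (k + i) (by omega), fun i hi => h.mem (k + i) (by omega)⟩

lemma append (hp : IsWalkIn D A n p x y) (hq : IsWalkIn D A m q y z) :
    IsWalkIn D A (n + m) (fun i => if i ≤ n then p i else q (i - n)) x z := by
  have hq' : ∀ i, n ≤ i → (if i ≤ n then p i else q (i - n)) = q (i - n) := by
    intro i hi
    split_ifs with h
    · rw [show i = n by omega, Nat.sub_self, hp.finish, hq.start]
    · rfl
  refine ⟨by simp [hp.start], by rw [hq' _ (by omega), Nat.add_sub_cancel_left, hq.finish],
    fun i hi => ?_, fun i hi => ?_⟩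
  · rcases lt_or_ge i n with h | h
    · simpa [h.le, Nat.succ_le_of_lt h] using hp.adj i h
    · rw [hq' i h, hq' (i + 1) (by omega), Nat.sub_add_comm h]
      exact hq.adj _ (by omega)
  · rcases le_or_gt i n with h | h
    · simpa [h] using hp.mem i h
    · rw [hq' i h.le]
      exact hq.mem _ (by omega)

lemma pos_of_ne (h : IsWalkIn D A n p x y) (hxy : x ≠ y) : 0 < n :=
  Nat.pos_of_ne_zero fun hn => hxy (h.start.symm.trans (hn ▸ h.finish))

end IsWalkIn

def ReachIn (D : V → V → Prop) (A : Set V) (x y : V) : Prop :=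
  ∃ n p, IsWalkIn D A n p x y

lemma ReachIn.refl (hx : x ∈ A) : ReachIn D A x x := ⟨0, _, .nil hx⟩

lemma ReachIn.trans (hxy : ReachIn D A x y) (hyz : ReachIn D A y z) : ReachIn D A x z :=
  let ⟨_, _, hp⟩ := hxy
  let ⟨_, _, hq⟩ := hyz
  ⟨_, _, hp.append hq⟩

/-- Junk value `0` when `y` is not reachable from `x` inside `A`. -/
noncomputable def distIn (D : V → V → Prop) (A : Set V) (x y : V) : ℕ :=
  sInf {n | ∃ p, IsWalkIn D A n p x y}

lemma distIn_le (h : IsWalkIn D A n p x y) : distIn D A x y ≤ n := Nat.sInf_le ⟨p, h⟩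

lemma ReachIn.exists_walk_distIn (h : ReachIn D A x y) :
    ∃ p, IsWalkIn D A (distIn D A x y) p x y :=
  Nat.sInf_mem h

lemma distIn_le_distIn_add_one_of_adj_right (hxy : ReachIn D A x y) (hyz : D y z) (hz : z ∈ A) :
    distIn D A x z ≤ distIn D A x y + 1 := by
  obtain ⟨p, hp⟩ := hxy.exists_walk_distIn
  exact distIn_le (hp.append (.single hyz (hp.finish ▸ hp.mem _ le_rfl) hz))

lemma distIn_le_distIn_add_one_of_adj_left (hxy : D x y) (hx : x ∈ A)
    (hyz : ReachIn D A y z) : distIn D A x z ≤ distIn D A y z + 1 := by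
  obtain ⟨p, hp⟩ := hyz.exists_walk_distIn
  have hy : y ∈ A := hp.start ▸ hp.mem 0 (Nat.zero_le _)
  exact (distIn_le ((IsWalkIn.single hxy hx hy).append hp)).trans_eq (add_comm _ _)

lemma ReachIn.exists_injective_walk (h : ReachIn D A x y) :
    ∃ n p, IsWalkIn D A n p x y ∧ ∀ i ≤ n, ∀ j ≤ n, p i = p j → i = j := by
  obtain ⟨p, hp⟩ := h.exists_walk_distIn
  refine ⟨_, p, hp, ?_⟩
  -- cutting out the closed subwalk between two visits of a vertex would shorten a shortest walk
  suffices ∀ i j, i < j → j ≤ distIn D A x y → p i ≠ p j by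
    intro i hi j hj hij
    by_contra hne
    rcases Nat.lt_or_gt_of_ne hne with h | h
    exacts [this i j h hj hij, this j i h hi hij.symm]
  intro i j hij hj he
  have := distIn_le ((hp.take (hij.le.trans hj)).append (he ▸ hp.drop hj))
  omega

end Walks

section Components

variable {V : Type*} {D : V → V → Prop} {A : Set V} {n : ℕ} {p : ℕ → V} {x y z : V}

def strongComponentIn (D : V → V → Prop) (A : Set V) (x : V) : Set V :=
  {y | ReachIn D A x y ∧ ReachIn D A y x}

lemma IsWalkIn.mem_strongComponentIn (h : IsWalkIn D A n p y z)
    (hy : y ∈ strongComponentIn D A x) (hz : z ∈ strongComponentIn D A x) :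
    ∀ i ≤ n, p i ∈ strongComponentIn D A x := fun i hi =>
  ⟨hy.1.trans ⟨i, p, h.take hi⟩, ReachIn.trans ⟨_, _, h.drop hi⟩ hz.2⟩

lemma strongComponentIn_eq (hy : y ∈ strongComponentIn D A x) :
    strongComponentIn D A y = strongComponentIn D A x := by
  ext z
  exact ⟨fun hz => ⟨hy.1.trans hz.1, hz.2.trans hy.2⟩,
    fun hz => ⟨hy.2.trans hz.1, hz.2.trans hy.1⟩⟩

lemma reachIn_strongComponentIn (hy : y ∈ strongComponentIn D A x)
    (hz : z ∈ strongComponentIn D A x) : ReachIn D (strongComponentIn D A x) y z := by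
  obtain ⟨n, p, hp⟩ := hy.2.trans hz.1
  exact ⟨n, p, ⟨hp.start, hp.finish, hp.adj, hp.mem_strongComponentIn hy hz⟩⟩

end Components

section Dicolorable

variable {V : Type*} {D : V → V → Prop} {A B : Set V} {k l : ℕ}

/-- `χ⃗(D[A]) ≤ k`. -/
def Dicolorable (D : V → V → Prop) (A : Set V) (k : ℕ) : Prop :=
  ∃ P : Fin k → Set V, A ⊆ ⋃ i, P i ∧ ∀ i, ¬ HasCycleIn D (P i)

lemma HasCycleIn.mono (h : HasCycleIn D A) (hAB : A ⊆ B) : HasCycleIn D B :=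
  let ⟨n, p, hn, hc, hadj, hmem⟩ := h
  ⟨n, p, hn, hc, hadj, fun i hi => hAB (hmem i hi)⟩

lemma not_hasCycleIn_of_subsingleton (hD : ∀ x, ¬ D x x) (hA : A.Subsingleton) :
    ¬ HasCycleIn D A := by
  rintro ⟨n, p, hn, -, hadj, hmem⟩
  exact hD (p 0) (by simpa [hA (hmem 0 (Nat.zero_le n)) (hmem 1 hn)] using hadj 0 hn)

lemma Dicolorable.mono (h : Dicolorable D A k) (hkl : k ≤ l) : Dicolorable D A l := by
  obtain ⟨P, hcover, hP⟩ := h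
  refine ⟨fun j => if hj : (j : ℕ) < k then P ⟨j, hj⟩ else ∅, fun v hv => ?_, fun j => ?_⟩
  · obtain ⟨i, hi⟩ := mem_iUnion.1 (hcover hv)
    exact mem_iUnion.2 ⟨Fin.castLE hkl i, by simpa [i.isLt] using hi⟩
  · dsimp only
    split_ifs
    · exact hP _
    · rintro ⟨n, p, -, -, -, hmem⟩
      exact hmem 0 (Nat.zero_le n)

lemma dicolorable_of_cover {ι : Type*} [Fintype ι] (P : ι → Set V) (hA : A ⊆ ⋃ i, P i)
    (hP : ∀ i, ¬ HasCycleIn D (P i)) : Dicolorable D A (Fintype.card ι) := by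
  refine ⟨P ∘ (Fintype.equivFin ι).symm, fun v hv => ?_, fun i => hP _⟩
  obtain ⟨i, hi⟩ := mem_iUnion.1 (hA hv)
  exact mem_iUnion.2 ⟨Fintype.equivFin ι i, by simpa using hi⟩

lemma dicolorable_univ_card [Fintype V] (hD : ∀ x, ¬ D x x) :
    Dicolorable D univ (Fintype.card V) :=
  dicolorable_of_cover (fun v => {v}) (fun v _ => mem_iUnion.2 ⟨v, rfl⟩)
    fun _ => not_hasCycleIn_of_subsingleton hD subsingleton_singleton

lemma dichrom_le_of_dicolorable (h : Dicolorable D univ k) : dichrom D ≤ k := by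
  obtain ⟨P, hcover, hP⟩ := h
  choose c hc using fun v => mem_iUnion.1 (hcover (mem_univ v))
  exact Nat.sInf_le ⟨c, fun i hi => hP i (hi.mono fun v hv => hv ▸ hc v)⟩

lemma HasCycleIn.of_image_val {s : Set B} (h : HasCycleIn D (Subtype.val '' s)) :
    HasCycleIn (fun x y : B => D x y) s := by
  obtain ⟨n, p, hn, hc, hadj, hmem⟩ := h
  have hB (i : ℕ) : p (min i n) ∈ B := by
    obtain ⟨x, -, hx⟩ := hmem _ (min_le_right i n)
    exact hx ▸ x.2
  refine ⟨n, fun i => ⟨p (min i n), hB i⟩, hn, ?_, fun i hi => ?_, fun i hi => ?_⟩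
  · simp [hc]
  · simpa [min_eq_left hi.le, min_eq_left (Nat.succ_le_of_lt hi)] using hadj i hi
  · obtain ⟨x, hx, hxp⟩ := hmem i hi
    convert hx
    ext
    simp [min_eq_left hi, hxp]

lemma Dicolorable.of_subtype (h : Dicolorable (fun x y : B => D x y) univ k) :
    Dicolorable D B k := by
  obtain ⟨P, hcover, hP⟩ := h
  refine ⟨fun i => Subtype.val '' P i, fun v hv => ?_, fun i hi => hP i hi.of_image_val⟩
  obtain ⟨i, hi⟩ := mem_iUnion.1 (hcover (mem_univ ⟨v, hv⟩))
  exact mem_iUnion.2 ⟨i, ⟨v, hv⟩, hi, rfl⟩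

lemma Dicolorable.of_strongComponentIn
    (h : ∀ x ∈ A, Dicolorable D (strongComponentIn D A x) k) : Dicolorable D A k := by
  have hchoice (C : Set V) : ∃ P : Fin k → Set V, (∃ x ∈ A, C = strongComponentIn D A x) →
      C ⊆ ⋃ i, P i ∧ ∀ i, ¬ HasCycleIn D (P i) := by
    by_cases hC : ∃ x ∈ A, C = strongComponentIn D A x
    · obtain ⟨x, hx, rfl⟩ := hC
      obtain ⟨P, hP⟩ := h x hx
      exact ⟨P, fun _ => hP⟩
    · exact ⟨fun _ => ∅, fun h => absurd h hC⟩
  -- the cover is chosen per component as a set, so all vertices of a cycle use the same one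
  choose P hP using hchoice
  have hself {v : V} (hv : v ∈ A) : v ∈ strongComponentIn D A v := ⟨.refl hv, .refl hv⟩
  refine ⟨fun i => {v ∈ A | v ∈ P (strongComponentIn D A v) i}, fun v hv => ?_, fun i => ?_⟩
  · obtain ⟨i, hi⟩ := mem_iUnion.1 ((hP _ ⟨v, hv, rfl⟩).1 (hself hv))
    exact mem_iUnion.2 ⟨i, hv, hi⟩
  · rintro ⟨n, p, hn, hc, hadj, hmem⟩
    have h0 : p 0 ∈ A := (hmem 0 (Nat.zero_le n)).1
    have hcomp : ∀ j ≤ n, p j ∈ strongComponentIn D A (p 0) :=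
      IsWalkIn.mem_strongComponentIn ⟨rfl, hc, hadj, fun j hj => (hmem j hj).1⟩
        (hself h0) (hself h0)
    refine (hP _ ⟨p 0, h0, rfl⟩).2 i ⟨n, p, hn, hc, hadj, fun j hj => ?_⟩
    simpa [strongComponentIn_eq (hcomp j hj)] using (hmem j hj).2

end Dicolorable

section Levels

variable {V : Type*} {D : V → V → Prop} {S : Set V} {r x y : V} {t : ℕ}

lemma eq_of_le_add_one_of_modEq {a : ℕ → ℕ} {n : ℕ} (hstep : ∀ i < n, a (i + 1) ≤ a i + 1)
    (hmod : ∀ i < n, a (i + 1) ≡ a i [MOD 2]) (hclosed : a n = a 0) : ∀ i ≤ n, a i = a 0 := by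
  have hanti : AntitoneOn a (Iic n) := antitoneOn_of_add_one_le ordConnected_Iic
    fun i _ _ hi => by have := hstep i hi; have := hmod i hi; unfold Nat.ModEq at *; omega
  exact fun i hi =>
    le_antisymm (hanti (Nat.zero_le n) hi (Nat.zero_le i)) (hclosed ▸ hanti hi self_mem_Iic hi)

lemma eq_of_le_add_one_of_modEq' {a : ℕ → ℕ} {n : ℕ} (hstep : ∀ i < n, a i ≤ a (i + 1) + 1)
    (hmod : ∀ i < n, a (i + 1) ≡ a i [MOD 2]) (hclosed : a n = a 0) : ∀ i ≤ n, a i = a 0 := by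
  have hmono : MonotoneOn a (Iic n) := monotoneOn_of_le_add_one ordConnected_Iic
    fun i _ _ hi => by have := hstep i hi; have := hmod i hi; unfold Nat.ModEq at *; omega
  exact fun i hi =>
    le_antisymm (hclosed ▸ hmono hi self_mem_Iic hi) (hmono (Nat.zero_le n) hi (Nat.zero_le i))

def levelIn (D : V → V → Prop) (S : Set V) (r : V) (i j : ℕ) : Set V :=
  {v ∈ S | distIn D S r v = i ∧ distIn D S v r = j}

lemma exists_levelIn_not_dicolorable (hS : ∀ v ∈ S, ReachIn D S r v ∧ ReachIn D S v r)
    (h : ¬ Dicolorable D S (4 * t)) :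
    ∃ i j, ¬ Dicolorable D (levelIn D S r i j) t := by
  by_contra! hlev
  choose Q hQ hQacyc using hlev
  apply h
  have := dicolorable_of_cover (D := D) (A := S) (fun c : ZMod 2 × ZMod 2 × Fin t =>
      {v ∈ S | (distIn D S r v : ZMod 2) = c.1 ∧ (distIn D S v r : ZMod 2) = c.2.1 ∧
        v ∈ Q (distIn D S r v) (distIn D S v r) c.2.2}) ?_ ?_
  · simpa [ZMod.card, ← mul_assoc] using this
  · intro v hv
    obtain ⟨i, hi⟩ := mem_iUnion.1 (hQ _ _ ⟨hv, rfl, rfl⟩)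
    exact mem_iUnion.2 ⟨(_, _, i), hv, rfl, rfl, hi⟩
  · rintro ⟨a, b, i⟩ ⟨n, p, hn, hc, hadj, hmem⟩
    have hpS (k : ℕ) (hk : k ≤ n) : p k ∈ S := (hmem k hk).1
    have hfrom : ∀ k ≤ n, distIn D S r (p k) = distIn D S r (p 0) :=
      eq_of_le_add_one_of_modEq
        (fun k hk => distIn_le_distIn_add_one_of_adj_right (hS _ (hpS k hk.le)).1 (hadj k hk)
          (hpS _ hk))
        (fun k hk => (ZMod.natCast_eq_natCast_iff' _ _ 2).1
          ((hmem _ hk).2.1.trans (hmem k hk.le).2.1.symm))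
        (by rw [hc])
    have hto : ∀ k ≤ n, distIn D S (p k) r = distIn D S (p 0) r :=
      eq_of_le_add_one_of_modEq'
        (fun k hk => distIn_le_distIn_add_one_of_adj_left (hadj k hk) (hpS k hk.le)
          (hS _ (hpS _ hk)).2)
        (fun k hk => (ZMod.natCast_eq_natCast_iff' _ _ 2).1
          ((hmem _ hk).2.2.1.trans (hmem k hk.le).2.2.1.symm))
        (by rw [hc])
    refine hQacyc (distIn D S r (p 0)) (distIn D S (p 0) r) i
      ⟨n, p, hn, hc, hadj, fun k hk => ?_⟩
    simpa [hfrom k hk, hto k hk] using (hmem k hk).2.2.2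

lemma reachIn_avoiding_levelIn (hS : ∀ v ∈ S, ReachIn D S r v ∧ ReachIn D S v r)
    {i j : ℕ} (hx : x ∈ levelIn D S r i j) (hy : y ∈ levelIn D S r i j) :
    ReachIn D {v | v = x ∨ v = y ∨ v ∉ levelIn D S r i j} x y := by
  obtain ⟨p, hp⟩ := (hS x hx.1).2.exists_walk_distIn
  obtain ⟨q, hq⟩ := (hS y hy.1).1.exists_walk_distIn
  refine ReachIn.trans ⟨_, p, hp.start, hp.finish, hp.adj, fun k hk => ?_⟩
    ⟨_, q, hq.start, hq.finish, hq.adj, fun k hk => ?_⟩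
  · rcases Nat.eq_zero_or_pos k with rfl | hk0
    · exact Or.inl hp.start
    · refine Or.inr (Or.inr fun hlev => ?_)
      have := distIn_le (hp.drop hk)
      have := hlev.2.2
      have := hx.2.2
      omega
  · rcases eq_or_lt_of_le hk with rfl | hk'
    · exact Or.inr (Or.inl hq.finish)
    · refine Or.inr (Or.inr fun hlev => ?_)
      have := distIn_le (hq.take hk)
      have := hlev.2.1
      have := hy.2.1
      omega

end Levels

section Subdivision

variable {U V : Type*} {D : V → V → Prop} {B : Set V}

def IsLinkedOutside (D : V → V → Prop) (B : Set V) : Prop :=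
  ∀ x ∈ B, ∀ y ∈ B, ∃ n p, IsWalkIn D univ n p x y ∧
    (∀ i ≤ n, ∀ j ≤ n, p i = p j → i = j) ∧ ∀ i, 0 < i → i < n → p i ∉ B

lemma isLinkedOutside_of_reachIn
    (h : ∀ x ∈ B, ∀ y ∈ B, ReachIn D {v | v = x ∨ v = y ∨ v ∉ B} x y) :
    IsLinkedOutside D B := by
  intro x hx y hy
  obtain ⟨n, p, hp, hinj⟩ := (h x hx y hy).exists_injective_walk
  refine ⟨n, p, hp.mono (subset_univ _), hinj, fun i hi0 hin hiB => ?_⟩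
  rcases hp.mem i hin.le with hpx | hpy | hout
  · exact hi0.ne' (hinj i hin.le 0 (Nat.zero_le n) (hpx.trans hp.start.symm))
  · exact hin.ne (hinj i hin.le n le_rfl (hpy.trans hp.finish.symm))
  · exact hout hiB

theorem exists_isLinkedOutside_not_dicolorable {t : ℕ} (h : ¬ Dicolorable D univ (4 * t)) :
    ∃ B, IsLinkedOutside D B ∧ ¬ Dicolorable D B t := by
  obtain ⟨r, -, hr⟩ : ∃ r ∈ univ, ¬ Dicolorable D (strongComponentIn D univ r) (4 * t) := by
    by_contra! h'
    exact h (.of_strongComponentIn h')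
  have hrr : r ∈ strongComponentIn D univ r := ⟨.refl trivial, .refl trivial⟩
  have hS : ∀ v ∈ strongComponentIn D univ r,
      ReachIn D (strongComponentIn D univ r) r v ∧ ReachIn D (strongComponentIn D univ r) v r :=
    fun v hv => ⟨reachIn_strongComponentIn hrr hv, reachIn_strongComponentIn hv hrr⟩
  obtain ⟨i, j, hij⟩ := exists_levelIn_not_dicolorable hS hr
  exact ⟨_, isLinkedOutside_of_reachIn fun x hx y hy => reachIn_avoiding_levelIn hS hx hy, hij⟩

lemma IsSubdivision.of_erase_arc {F : U → U → Prop} {u₀ v₀ : U}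
    (hsub : IsSubdivision (fun u v => F u v ∧ (u, v) ≠ (u₀, v₀)) (fun x y : B => D x y))
    (hB : IsLinkedOutside D B) (huv : u₀ ≠ v₀) : IsSubdivision F D := by
  classical
  obtain ⟨emb, len, p, hinj, hlen, hend, hadj, hpinj, hint, hdisj⟩ := hsub
  have hemb : Function.Injective fun u => (emb u : V) := Subtype.val_injective.comp hinj
  obtain ⟨n, q, hq, hqinj, hqout⟩ := hB _ (emb u₀).2 _ (emb v₀).2
  refine ⟨fun u => emb u, fun u v => if (u, v) = (u₀, v₀) then n else len u v,
    fun u v => if (u, v) = (u₀, v₀) then q else fun i => p u v i, hemb, ?_, ?_, ?_, ?_, ?_, ?_⟩ <;>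
    dsimp only
  · intro u v h
    split_ifs with e
    exacts [hq.pos_of_ne (hemb.ne huv), hlen u v ⟨h, e⟩]
  · intro u v h
    split_ifs with e
    · obtain ⟨rfl, rfl⟩ := Prod.mk.inj e
      exact ⟨hq.start, hq.finish⟩
    · obtain ⟨h0, hlen⟩ := hend u v ⟨h, e⟩
      exact ⟨congrArg Subtype.val h0, congrArg Subtype.val hlen⟩
  · intro u v h i hi
    split_ifs at hi ⊢ with e
    exacts [hq.adj i hi, hadj u v ⟨h, e⟩ i hi]
  · intro u v h i hi j hj
    split_ifs at hi hj ⊢ with e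
    exacts [hqinj i hi j hj, fun he => hpinj u v ⟨h, e⟩ i hi j hj (Subtype.ext he)]
  · intro u v h i hi0 hi w
    split_ifs at hi ⊢ with e
    exacts [fun he => hqout i hi0 hi (he ▸ (emb w).2),
      fun he => hint u v ⟨h, e⟩ i hi0 hi w (Subtype.ext he)]
  · intro u v h u' v' h' hne i hi0 hi j hj0 hj
    by_cases e : (u, v) = (u₀, v₀) <;> by_cases e' : (u', v') = (u₀, v₀) <;>
      simp only [e, e', if_true, if_false] at hi hj ⊢
    · exact absurd (e.trans e'.symm) hne
    · exact fun he => hqout i hi0 hi (he ▸ (p u' v' j).2)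
    · exact fun he => hqout j hj0 hj (he ▸ (p u v i).2)
    · exact fun he => hdisj u v ⟨h, e⟩ u' v' ⟨h', e'⟩ hne i hi0 hi j hj0 hj (Subtype.ext he)

lemma isSubdivision_of_no_arcs {F : U → U → Prop} (hF : ∀ u v, ¬ F u v) (e : U ↪ V) :
    IsSubdivision F D :=
  ⟨e, fun _ _ => 0, fun u _ _ => e u, e.injective, fun u v h => absurd h (hF u v),
    fun u v h => absurd h (hF u v), fun u v h => absurd h (hF u v),
    fun u v h => absurd h (hF u v), fun u v h => absurd h (hF u v),
    fun u v h => absurd h (hF u v)⟩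

lemma nonempty_embedding_of_not_dicolorable [Fintype U] (hD : ∀ x, ¬ D x x)
    (h : ¬ Dicolorable D univ (Fintype.card U - 1)) : Nonempty (U ↪ V) := by
  rcases finite_or_infinite V with hV | hV
  · have := Fintype.ofFinite V
    refine Function.Embedding.nonempty_of_card_le (not_lt.1 fun hlt => h ?_)
    exact (dicolorable_univ_card hD).mono (by omega)
  · exact ⟨(Fintype.equivFin U).toEmbedding.trans
      (Fin.valEmbedding.trans (Infinite.natEmbedding V))⟩

lemma card_arcs_erase_add_one [Finite U] {F : U → U → Prop} {u₀ v₀ : U} (h : F u₀ v₀) :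
    Nat.card {a : U × U // F a.1 a.2 ∧ (a.1, a.2) ≠ (u₀, v₀)} + 1 =
      Nat.card {a : U × U // F a.1 a.2} := by
  have hdiff : {a : U × U | F a.1 a.2} \ {(u₀, v₀)} =
      {a | F a.1 a.2 ∧ (a.1, a.2) ≠ (u₀, v₀)} := by
    ext
    simp
  have := ncard_sdiff_singleton_add_one (s := {a : U × U | F a.1 a.2}) (a := (u₀, v₀)) h
  rwa [hdiff] at this

theorem isSubdivision_of_not_dicolorable [Fintype U] (F : U → U → Prop) (hF : ∀ u, ¬ F u u)
    {m : ℕ} (hm : Nat.card {a : U × U // F a.1 a.2} = m) (D : V → V → Prop) (hD : ∀ x, ¬ D x x)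
    (h : ¬ Dicolorable D univ (4 ^ m * (Fintype.card U - 1))) : IsSubdivision F D := by
  induction m generalizing F V with
  | zero =>
    have hF : ∀ u v, ¬ F u v := fun u v huv => by
      have : Nonempty {a : U × U // F a.1 a.2} := ⟨⟨(u, v), huv⟩⟩
      have := Nat.card_pos (α := {a : U × U // F a.1 a.2})
      omega
    obtain ⟨e⟩ := nonempty_embedding_of_not_dicolorable hD (by simpa using h)
    exact isSubdivision_of_no_arcs hF e
  | succ m ih =>
    obtain ⟨⟨⟨u₀, v₀⟩, h₀⟩⟩ : Nonempty {a : U × U // F a.1 a.2} :=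
      (Nat.card_pos_iff.1 (by omega)).1
    have huv : u₀ ≠ v₀ := fun e => hF v₀ (e ▸ h₀)
    obtain ⟨B, hB, hBcol⟩ := exists_isLinkedOutside_not_dicolorable (D := D)
      (t := 4 ^ m * (Fintype.card U - 1)) (by rwa [pow_succ, mul_comm _ 4, mul_assoc] at h)
    have hsub : IsSubdivision (fun u v => F u v ∧ (u, v) ≠ (u₀, v₀)) (fun x y : B => D x y) :=
      ih _ (fun u hu => hF u hu.1)
        (by have := card_arcs_erase_add_one (u₀ := u₀) (v₀ := v₀) h₀; omega) _
        (fun x => hD x) fun hcol => hBcol hcol.of_subtype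
    exact hsub.of_erase_arc hB huv

end Subdivision

theorem stmt14_general (U : Type) [Fintype U] (F : U → U → Prop) (hF : Irreflexive F)
    (V : Type) (D : V → V → Prop) (hD : Irreflexive D)
    (hchi : 4 ^ (Nat.card {a : U × U // F a.1 a.2}) * (Fintype.card U - 1) + 1 ≤ dichrom D) :
    IsSubdivision F D :=
  isSubdivision_of_not_dicolorable F hF rfl D hD fun h => (dichrom_le_of_dicolorable h).not_gt hchi

/-- Every digraph `F` with `n` vertices and `m` arcs is χ⃗-maderian with
`mad_{χ⃗}(F) ≤ 4^m (n-1) + 1`: every digraph with dichromatic number at least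
`4^m (n-1) + 1` contains a subdivision of `F`. -/
theorem stmt14 (U : Type) [Fintype U] (F : U → U → Prop) (hF : Irreflexive F)
    (V : Type) [Fintype V] (D : V → V → Prop) (hD : Irreflexive D)
    (hchi : 4 ^ (Nat.card {a : U × U // F a.1 a.2}) * (Fintype.card U - 1) + 1 ≤ dichrom D) :
    IsSubdivision F D :=
  stmt14_general U F hF V D hD hchi
end
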